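/- If four robots are placed on a ring of even size n at positions forming two axes of symmetry (i.e., positions p, p+a, p+n/2, p+n/2+a for some offset a), and all four robots execute the same deterministic rule based on identical views, then after any simultaneous activation the resulting configuration still has two axes of symmetry (the multiset of positions is invariant under the same two reflections). -/

import Mathlib

/-!
Both reflections `σ x = c - x` (with `c = 2p + a`) and `x ↦ c + n/2 - x` lie in the Klein
four-group generated by `σ` and the half-turn `τ x = x + n/2`, which commute because
`n/2 + n/2 = 0`. After one move the robots sit at `q, σ q, τ q, τ (σ q)` with `q = p + ε`,
i.e. on a single orbit of this group, and an orbit is invariant under every element of the group.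
-/

open Function

namespace Multiset

variable {α : Type*} {f g : α → α}

theorem map_add_map_self_of_involutive (hf : Involutive f) (s : Multiset α) :
    (s + s.map f).map f = s + s.map f := by
  rw [map_add, map_map, hf.comp_self, map_id, add_comm]

theorem map_add_map_eq_self_of_commute (hfg : Function.Commute f g) {s : Multiset α}
    (hs : s.map f = s) : (s + s.map g).map f = s + s.map g := by
  rw [map_add, map_map, hfg.comp_eq, ← map_map, hs]

end Multiset

section KleinOrbit

variable {G : Type*} [AddCommGroup G] {h : G}

theorem involutive_add_right_of_add_self_eq_zero (hh : h + h = 0) :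
    Involutive (· + h) := fun x => by simp only [add_assoc, hh, add_zero]

theorem commute_sub_add_right_of_add_self_eq_zero (c : G) (hh : h + h = 0) :
    Function.Commute (c - ·) (· + h) := fun x => by
  show c - (x + h) = c - x + h
  rw [sub_add_eq_sub_sub, sub_eq_add_neg _ h, neg_eq_of_add_eq_zero_left hh]

def kleinOrbit (c h q : G) : Multiset G := {q, c - q, q + h, c - q + h}

theorem kleinOrbit_eq_add_map (c q : G) :
    kleinOrbit c h q =
      ({q} + ({q} : Multiset G).map (c - ·)) + ({q} + ({q} : Multiset G).map (c - ·)).map (· + h) :=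
  rfl

variable (c q : G)

theorem map_sub_kleinOrbit (hh : h + h = 0) :
    (kleinOrbit c h q).map (c - ·) = kleinOrbit c h q := by
  rw [kleinOrbit_eq_add_map]
  exact Multiset.map_add_map_eq_self_of_commute (commute_sub_add_right_of_add_self_eq_zero c hh)
    (Multiset.map_add_map_self_of_involutive (sub_sub_cancel c) _)

theorem map_add_sub_kleinOrbit (hh : h + h = 0) :
    (kleinOrbit c h q).map (c + h - ·) = kleinOrbit c h q := by
  have hσ : (c + h - ·) = (· + h) ∘ (c - ·) := funext fun x => add_sub_right_comm c h x
  rw [hσ, ← Multiset.map_map, map_sub_kleinOrbit c q hh, kleinOrbit_eq_add_map,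
    Multiset.map_add_map_self_of_involutive (involutive_add_right_of_add_self_eq_zero hh)]

end KleinOrbit

theorem ZMod.natCast_half_add_self {n : ℕ} (hn : 2 * (n / 2) = n) :
    ((n / 2 : ℕ) : ZMod n) + ((n / 2 : ℕ) : ZMod n) = 0 := by
  rw [← two_mul, ← Nat.cast_ofNat, ← Nat.cast_mul, hn, ZMod.natCast_self]

theorem stmt0_general (n : ℕ) (hn : 2 * (n / 2) = n) (p a ε : ZMod n) :
    let h : ZMod n := ((n / 2 : ℕ) : ZMod n)
    let M' : Multiset (ZMod n) := {p + ε, p + a - ε, p + h + ε, p + h + a - ε}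
    Multiset.map (fun x => (2 * p + a) - x) M' = M' ∧
    Multiset.map (fun x => (2 * p + a + ((n / 2 : ℕ) : ZMod n)) - x) M' = M' := by
  intro h M'
  have hM' : M' = kleinOrbit (2 * p + a) h (p + ε) := by
    unfold kleinOrbit
    have h₁ : p + a - ε = (2 * p + a) - (p + ε) := by ring
    have h₂ : p + h + ε = p + ε + h := by ring
    have h₃ : p + h + a - ε = (2 * p + a) - (p + ε) + h := by ring
    rw [← h₃, ← h₂, ← h₁]
  have hh : h + h = 0 := ZMod.natCast_half_add_self hn
  rw [hM']
  exact ⟨map_sub_kleinOrbit _ _ hh, map_add_sub_kleinOrbit _ _ hh⟩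

/-- Four robots on an even ring at positions `p, p+a, p+n/2, p+n/2+a` (two axes of
symmetry, reflections `x ↦ 2p+a-x` and `x ↦ 2p+a+n/2-x`).  All four have identical
views and move simultaneously to an adjacent node, symmetric robots moving in
symmetric directions (common offset `ε = ±1`, mirrored for reflected robots).
The resulting multiset of positions is still invariant under the same two
reflections. -/
theorem stmt0 (n : ℕ) (hn : 2 * (n / 2) = n) (p a ε : ZMod n)
    (hε : ε = 1 ∨ ε = -1) :
    let h : ZMod n := ((n / 2 : ℕ) : ZMod n)
    let M' : Multiset (ZMod n) := {p + ε, p + a - ε, p + h + ε, p + h + a - ε}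
    Multiset.map (fun x => (2 * p + a) - x) M' = M' ∧
    Multiset.map (fun x => (2 * p + a + ((n / 2 : ℕ) : ZMod n)) - x) M' = M' :=
  stmt0_general n hn p a ε
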